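/- Let (μ_k)_{k∈ℕ} be a sequence of pairwise distinct points of (0,1) satisfying the Carleson condition, and let ν = ∑_{k≥0} (1 − μ_k²) δ_{μ_k} be the associated discrete measure on [0,1). Assume that the family (t ↦ t^ℓ)_{ℓ∈ℕ} is a frame for L²(ν), and let (λ_n)_{n∈ℕ} be a sequence of positive real numbers. If the family (t ↦ t^{λ_n})_{n∈ℕ} is a frame for L²(ν), then both of the following hold: (1) ∑_{n≥0} 1/λ_n = ∞ (the Müntz–Szász condition); and (2) 0 < inf_k (1 − μ_k²) ∑_{n≥0} μ_k^{2λ_n} ≤ sup_k (1 − μ_k²) ∑_{n≥0} μ_k^{2λ_n} < ∞ (a Carleson-type condition). -/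

import Mathlib

open MeasureTheory

noncomputable section

/-- The Carleson (interpolation) condition for a sequence in the unit disc. -/
def CarlesonCondition (z : ℕ → ℂ) : Prop :=
  ∃ δ : ℝ, 0 < δ ∧ ∀ n : ℕ,
    δ ≤ ∏' k : {k : ℕ // k ≠ n}, ‖z n - z (k : ℕ)‖ / ‖1 - (starRingEnd ℂ) (z n) * z (k : ℕ)‖

/-- The discrete measure `ν = ∑ₖ (1 − μₖ²) δ_{μₖ}` on `[0,1) ⊆ ℝ`. -/
def discMeasure (μ : ℕ → ℝ) : Measure ℝ :=
  Measure.sum fun k => ENNReal.ofReal (1 - μ k ^ 2) • Measure.dirac (μ k)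

/-- The family of power functions `t ↦ t^{Λ n}` is a frame for `L²(ν)`. -/
def IsPowerFrameL2 (ν : Measure ℝ) (Λ : ℕ → ℝ) : Prop :=
  ∃ A B : ℝ, 0 < A ∧ A ≤ B ∧ ∀ f : ℝ → ℂ, MemLp f 2 ν →
    A * (∫ t, ‖f t‖ ^ 2 ∂ν) ≤ ∑' n : ℕ, ‖∫ t, f t * ((t ^ Λ n : ℝ) : ℂ) ∂ν‖ ^ 2 ∧
    ∑' n : ℕ, ‖∫ t, f t * ((t ^ Λ n : ℝ) : ℂ) ∂ν‖ ^ 2 ≤ B * (∫ t, ‖f t‖ ^ 2 ∂ν)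

/-!
Testing the frame inequalities on the indicator of the atom `{μ k}` gives
`A ≤ (1 - μ k ^ 2) * ∑' n, μ k ^ (2 * lam n) ≤ B`, which is the Carleson-type condition.
If `∑ 1 / lam n` converged, then, since `(1 - x ^ 2) * x ^ (2 * l) ≤ e⁻¹ / l` on `(0, 1)`,
dominated convergence would make `(1 - x ^ 2) * ∑' n, x ^ (2 * lam n)` tend to `0` as `x → 1⁻`.
But a Carleson sequence is uniformly separated in the pseudo-hyperbolic metric, so it cannot
stay in a compact interval `[0, x]` with `x < 1`: it has points arbitrarily close to `1`, where
the lower frame bound `A > 0` is then violated.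
-/

open Filter Topology Set

lemma tprod_le_of_mem_Icc {ι : Type*} {F : ι → ℝ} (hF : ∀ i, F i ∈ Icc 0 1) (j : ι) :
    ∏' i, F i ≤ F j := by
  have hanti := Finset.prod_anti_set_of_le_one (fun i => (hF i).1) (fun i => (hF i).2)
  have hbdd : BddBelow (range fun s : Finset ι => ∏ i ∈ s, F i) :=
    ⟨0, by rintro _ ⟨s, rfl⟩; exact Finset.prod_nonneg fun i _ => (hF i).1⟩
  have hprod : HasProd F (⨅ s : Finset ι, ∏ i ∈ s, F i) := tendsto_atTop_ciInf hanti hbdd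
  rw [hprod.tprod_eq]
  exact (ciInf_le hbdd {j}).trans_eq (Finset.prod_singleton F j)

lemma norm_sub_le_norm_one_sub_conj_mul {a b : ℂ} (ha : ‖a‖ ≤ 1) (hb : ‖b‖ ≤ 1) :
    ‖a - b‖ ≤ ‖1 - starRingEnd ℂ a * b‖ := by
  have ha' : a.re ^ 2 + a.im ^ 2 ≤ 1 := by
    nlinarith [Complex.sq_norm a, Complex.normSq_apply a, norm_nonneg a]
  have hb' : b.re ^ 2 + b.im ^ 2 ≤ 1 := by
    nlinarith [Complex.sq_norm b, Complex.normSq_apply b, norm_nonneg b]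
  rw [← sq_le_sq₀ (norm_nonneg _) (norm_nonneg _), Complex.sq_norm, Complex.sq_norm,
    Complex.normSq_apply, Complex.normSq_apply]
  simp only [Complex.sub_re, Complex.sub_im, Complex.mul_re, Complex.mul_im, Complex.one_re,
    Complex.one_im, Complex.conj_re, Complex.conj_im]
  -- `‖1 - conj a * b‖ ^ 2 - ‖a - b‖ ^ 2 = (1 - ‖a‖ ^ 2) * (1 - ‖b‖ ^ 2)`
  nlinarith [mul_nonneg (sub_nonneg.2 ha') (sub_nonneg.2 hb')]

lemma Metric.not_isBounded_range_of_le_dist {X : Type*} [PseudoMetricSpace X] [ProperSpace X]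
    {u : ℕ → X} {ε : ℝ} (hε : 0 < ε) (hu : Pairwise fun m n => ε ≤ dist (u m) (u n)) :
    ¬ Bornology.IsBounded (range u) := by
  intro hbdd
  obtain ⟨_, -, φ, hφ, hconv⟩ := tendsto_subseq_of_bounded hbdd (mem_range_self (f := u))
  obtain ⟨N, hN⟩ := Metric.cauchySeq_iff'.1 hconv.cauchySeq ε hε
  exact (hN (N + 1) N.le_succ).not_ge (hu (hφ.injective.ne N.succ_ne_self))

lemma CarlesonCondition.exists_pos_le_pseudoHyperbolic {z : ℕ → ℂ} (hz : ∀ k, ‖z k‖ ≤ 1)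
    (h : CarlesonCondition z) :
    ∃ δ > 0, ∀ ⦃n k⦄, k ≠ n → δ ≤ ‖z n - z k‖ / ‖1 - starRingEnd ℂ (z n) * z k‖ := by
  obtain ⟨δ, hδ, hprod⟩ := h
  refine ⟨δ, hδ, fun n k hk =>
    (hprod n).trans (tprod_le_of_mem_Icc (fun i => ?_) (⟨k, hk⟩ : {k // k ≠ n}))⟩
  exact ⟨by positivity,
    div_le_one_of_le₀ (norm_sub_le_norm_one_sub_conj_mul (hz n) (hz i)) (norm_nonneg _)⟩

lemma CarlesonCondition.exists_lt_of_lt_one {μ : ℕ → ℝ} (hμ : ∀ k, μ k ∈ Ioo 0 1)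
    (h : CarlesonCondition fun k => (μ k : ℂ)) {x : ℝ} (hx : x < 1) : ∃ k, x < μ k := by
  obtain ⟨δ, hδ, hsep⟩ := h.exists_pos_le_pseudoHyperbolic fun k => by
    simpa [abs_of_pos (hμ k).1] using (hμ k).2.le
  by_contra! hle
  have hx0 : 0 < x := (hμ 0).1.trans_le (hle 0)
  have hbdd : Bornology.IsBounded (range μ) :=
    (Metric.isBounded_Icc 0 x).subset (range_subset_iff.2 fun k => ⟨(hμ k).1.le, hle k⟩)
  refine Metric.not_isBounded_range_of_le_dist (ε := δ * (1 - x ^ 2))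
    (mul_pos hδ (by nlinarith)) (fun m n hmn => ?_) hbdd
  have hmn' := hsep hmn.symm
  rw [← Complex.ofReal_sub, Complex.conj_ofReal, ← Complex.ofReal_mul, ← Complex.ofReal_one,
    ← Complex.ofReal_sub, Complex.norm_real, Complex.norm_real, Real.norm_eq_abs,
    Real.norm_eq_abs] at hmn'
  obtain ⟨hm0, hm1⟩ := hμ m
  obtain ⟨hn0, hn1⟩ := hμ n
  have hden : 1 - x ^ 2 ≤ |1 - μ m * μ n| := by
    rw [abs_of_pos (by nlinarith)]
    nlinarith [hle m, hle n]
  change δ * (1 - x ^ 2) ≤ dist (μ m) (μ n)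
  rw [Real.dist_eq]
  calc δ * (1 - x ^ 2) ≤ δ * |1 - μ m * μ n| := by gcongr
    _ ≤ |μ m - μ n| := (le_div_iff₀ (by nlinarith)).1 hmn'

lemma one_sub_sq_mul_rpow_le {x l : ℝ} (hx0 : 0 < x) (hx1 : x ≤ 1) (hl : 0 < l) :
    (1 - x ^ 2) * x ^ (2 * l) ≤ Real.exp (-1) / l := by
  have hrpow : x ^ (2 * l) ≤ Real.exp (-(2 * l * (1 - x))) := by
    rw [Real.rpow_def_of_pos hx0, Real.exp_le_exp]
    nlinarith [Real.log_le_sub_one_of_pos hx0]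
  calc (1 - x ^ 2) * x ^ (2 * l)
      ≤ 2 * (1 - x) * Real.exp (-(2 * l * (1 - x))) := by
        gcongr ?_ * ?_
        · nlinarith
    _ = 2 * l * (1 - x) * Real.exp (-(2 * l * (1 - x))) / l := by field_simp
    _ ≤ Real.exp (-1) / l := by gcongr; exact Real.mul_exp_neg_le_exp_neg_one _

def weightedPowerSum (lam : ℕ → ℝ) (x : ℝ) : ℝ :=
  (1 - x ^ 2) * ∑' n, x ^ (2 * lam n)

lemma tendsto_weightedPowerSum_nhdsLT_one {lam : ℕ → ℝ} (hlam : ∀ n, 0 < lam n)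
    (hs : Summable fun n => 1 / lam n) :
    Tendsto (weightedPowerSum lam) (𝓝[<] 1) (𝓝 0) := by
  have hterm (n : ℕ) : Tendsto (fun x : ℝ => (1 - x ^ 2) * x ^ (2 * lam n)) (𝓝[<] 1) (𝓝 0) := by
    have hcont : ContinuousAt (fun x : ℝ => (1 - x ^ 2) * x ^ (2 * lam n)) 1 := by
      fun_prop (disch := norm_num)
    simpa using hcont.tendsto.mono_left nhdsWithin_le_nhds
  have hbound : ∀ᶠ x in 𝓝[<] (1 : ℝ), ∀ n,
      ‖(1 - x ^ 2) * x ^ (2 * lam n)‖ ≤ Real.exp (-1) / lam n := by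
    filter_upwards [Ioo_mem_nhdsLT zero_lt_one] with x ⟨hx0, hx1⟩ n
    rw [Real.norm_of_nonneg (mul_nonneg (by nlinarith) (Real.rpow_nonneg hx0.le _))]
    exact one_sub_sq_mul_rpow_le hx0 hx1.le (hlam n)
  have hsum : Summable fun n => Real.exp (-1) / lam n := by
    simpa only [mul_one_div] using hs.mul_left (Real.exp (-1))
  have hlim := tendsto_tsum_of_dominated_convergence hsum hterm hbound
  rw [tsum_zero] at hlim
  exact hlim.congr fun x => tsum_mul_left

section DiscMeasure

variable {μ : ℕ → ℝ}

lemma discMeasure_restrict_singleton (hinj : Function.Injective μ) (k : ℕ) :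
    (discMeasure μ).restrict {μ k} = ENNReal.ofReal (1 - μ k ^ 2) • Measure.dirac (μ k) := by
  classical
  ext s hs
  rw [discMeasure, Measure.restrict_sum _ (measurableSet_singleton _), Measure.sum_apply _ hs,
    tsum_eq_single k]
  · rw [Measure.restrict_smul, restrict_dirac, if_pos (mem_singleton _)]
  · intro j hj
    rw [Measure.restrict_smul, restrict_dirac, if_neg (show μ j ∉ {μ k} from hinj.ne hj),
      smul_zero, Measure.coe_zero, Pi.zero_apply]

lemma integral_indicator_singleton_discMeasure {E : Type*} [NormedAddCommGroup E]
    [NormedSpace ℝ E] [CompleteSpace E] (hinj : Function.Injective μ) {k : ℕ}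
    (hk : μ k ^ 2 ≤ 1) (w : ℝ → E) :
    ∫ t, Set.indicator {μ k} w t ∂discMeasure μ = (1 - μ k ^ 2) • w (μ k) := by
  rw [integral_indicator (measurableSet_singleton _), discMeasure_restrict_singleton hinj,
    integral_smul_measure, integral_dirac, ENNReal.toReal_ofReal (sub_nonneg.2 hk)]

lemma weightedPowerSum_bounds_of_frame_inequality (hinj : Function.Injective μ) {k : ℕ}
    (hk : μ k ∈ Ico 0 1) {lam : ℕ → ℝ} {A B : ℝ}
    (h : ∀ f : ℝ → ℂ, MemLp f 2 (discMeasure μ) →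
      A * (∫ t, ‖f t‖ ^ 2 ∂discMeasure μ) ≤
        ∑' n, ‖∫ t, f t * ((t ^ lam n : ℝ) : ℂ) ∂discMeasure μ‖ ^ 2 ∧
      ∑' n, ‖∫ t, f t * ((t ^ lam n : ℝ) : ℂ) ∂discMeasure μ‖ ^ 2 ≤
        B * (∫ t, ‖f t‖ ^ 2 ∂discMeasure μ)) :
    A ≤ weightedPowerSum lam (μ k) ∧ weightedPowerSum lam (μ k) ≤ B := by
  obtain ⟨hk0, hk1⟩ := hk
  have hk2 : μ k ^ 2 ≤ 1 := by nlinarith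
  have hc : 0 < 1 - μ k ^ 2 := by nlinarith
  set e : ℝ → ℂ := Set.indicator {μ k} 1
  have he : MemLp e 2 (discMeasure μ) := by
    refine memLp_indicator_const 2 (measurableSet_singleton _) 1 (Or.inr ?_)
    rw [← Measure.restrict_apply_self, discMeasure_restrict_singleton hinj]
    simp
  have hnorm : ∫ t, ‖e t‖ ^ 2 ∂discMeasure μ = 1 - μ k ^ 2 := by
    have : (fun t => ‖e t‖ ^ 2) = Set.indicator {μ k} 1 := by
      funext t; by_cases ht : t = μ k <;> simp [e, ht]
    rw [this, integral_indicator_singleton_discMeasure hinj hk2, Pi.one_apply, smul_eq_mul,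
      mul_one]
  have hcoef (n : ℕ) : ‖∫ t, e t * ((t ^ lam n : ℝ) : ℂ) ∂discMeasure μ‖ ^ 2 =
      (1 - μ k ^ 2) ^ 2 * μ k ^ (2 * lam n) := by
    have : (fun t => e t * ((t ^ lam n : ℝ) : ℂ)) =
        Set.indicator {μ k} fun t => ((t ^ lam n : ℝ) : ℂ) := by
      funext t; by_cases ht : t = μ k <;> simp [e, ht]
    rw [this, integral_indicator_singleton_discMeasure hinj hk2, norm_smul, Complex.norm_real,
      Real.norm_of_nonneg hc.le, Real.norm_of_nonneg (Real.rpow_nonneg hk0 _), mul_comm 2,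
      Real.rpow_mul hk0, Real.rpow_two, mul_pow]
  obtain ⟨hlow, hup⟩ := h e he
  simp only [hnorm, hcoef, tsum_mul_left] at hlow hup
  constructor
  · exact le_of_mul_le_mul_right (by rw [weightedPowerSum]; linarith) hc
  · exact le_of_mul_le_mul_right (by rw [weightedPowerSum]; linarith) hc

end DiscMeasure

theorem necessary_conditions_for_power_frame_general
    (μ : ℕ → ℝ) (hμ : ∀ k, μ k ∈ Set.Ioo (0 : ℝ) 1) (hdist : Function.Injective μ)
    (hcarleson : CarlesonCondition fun k => (μ k : ℂ))
    (lam : ℕ → ℝ) (hlam : ∀ n, 0 < lam n)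
    (hframe : IsPowerFrameL2 (discMeasure μ) lam) :
    (¬ Summable fun n : ℕ => 1 / lam n) ∧
    ∃ c C : ℝ, 0 < c ∧ c ≤ C ∧ ∀ k : ℕ,
      c ≤ (1 - μ k ^ 2) * ∑' n : ℕ, μ k ^ (2 * lam n) ∧
      (1 - μ k ^ 2) * ∑' n : ℕ, μ k ^ (2 * lam n) ≤ C := by
  obtain ⟨A, B, hA, hAB, hfr⟩ := hframe
  have hbounds (k : ℕ) := weightedPowerSum_bounds_of_frame_inequality hdist
    (Ioo_subset_Ico_self (hμ k)) hfr
  refine ⟨fun hs => ?_, A, B, hA, hAB, hbounds⟩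
  obtain ⟨x, hx1, hx⟩ : ∃ x ∈ Iio (1 : ℝ), Ioo x 1 ⊆ {y | weightedPowerSum lam y < A} :=
    (mem_nhdsLT_iff_exists_Ioo_subset' zero_lt_one).1
      ((tendsto_weightedPowerSum_nhdsLT_one hlam hs).eventually (gt_mem_nhds hA))
  obtain ⟨k, hk⟩ := hcarleson.exists_lt_of_lt_one hμ hx1
  exact (hx ⟨hk, (hμ k).2⟩).not_ge (hbounds k).1

theorem necessary_conditions_for_power_frame
    (μ : ℕ → ℝ) (hμ : ∀ k, μ k ∈ Set.Ioo (0 : ℝ) 1) (hdist : Function.Injective μ)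
    (hcarleson : CarlesonCondition fun k => (μ k : ℂ))
    (hnat : IsPowerFrameL2 (discMeasure μ) fun ℓ : ℕ => (ℓ : ℝ))
    (lam : ℕ → ℝ) (hlam : ∀ n, 0 < lam n)
    (hframe : IsPowerFrameL2 (discMeasure μ) lam) :
    (¬ Summable fun n : ℕ => 1 / lam n) ∧
    ∃ c C : ℝ, 0 < c ∧ c ≤ C ∧ ∀ k : ℕ,
      c ≤ (1 - μ k ^ 2) * ∑' n : ℕ, μ k ^ (2 * lam n) ∧
      (1 - μ k ^ 2) * ∑' n : ℕ, μ k ^ (2 * lam n) ≤ C :=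
  necessary_conditions_for_power_frame_general μ hμ hdist hcarleson lam hlam hframe
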